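/- For a Boolean control network x(t+1) = L ⋉ u(t) ⋉ x(t) with L = [L₁ | L₂ | ... | L_M] partitioned into N×N logical blocks, a state δ_N^i is reachable from δ_N^j if and only if there exists τ ≥ 1 such that the (i,j) entry of (L_tot)^τ is 1, where L_tot = L₁ ∨ L₂ ∨ ... ∨ L_M. -/
import Mathlib


def bMul {k : ℕ} (A B : Matrix (Fin k) (Fin k) Bool) : Matrix (Fin k) (Fin k) Bool :=
  fun i j => decide (∃ l, A i l = true ∧ B l j = true)

def bPow {k : ℕ} (A : Matrix (Fin k) (Fin k) Bool) : ℕ → Matrix (Fin k) (Fin k) Bool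
  | 0 => fun i j => decide (i = j)
  | n + 1 => bMul (bPow A n) A

/-- State trajectory of the BCN `x(t+1) = L_{u(t)} x(t)`: the block `L_i` is the
next-state map `f i : Fin N → Fin N` (logical matrices acting on canonical vectors). -/
def traj {N M : ℕ} (f : Fin M → Fin N → Fin N) (u : ℕ → Fin M) (x0 : Fin N) : ℕ → Fin N
  | 0 => x0
  | t + 1 => f (u t) (traj f u x0 t)

/-- `L_tot = L₁ ∨ ... ∨ L_M`, the entrywise Boolean OR of the blocks. -/
def Ltot {N M : ℕ} (f : Fin M → Fin N → Fin N) : Matrix (Fin N) (Fin N) Bool :=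
  fun i j => decide (∃ v, f v j = i)

lemma traj_shift {N M : ℕ} (f : Fin M → Fin N → Fin N) (u : ℕ → Fin M) (x : Fin N) :
    ∀ t, traj f u x (t + 1) = traj f (fun s => u (s + 1)) (f (u 0) x) t := by
  intro t
  induction t with
  | zero => rfl
  | succ t ih => exact congrArg _ ih

lemma key {N M : ℕ} (f : Fin M → Fin N → Fin N) :
    ∀ τ, 1 ≤ τ → ∀ i j : Fin N,
      (bPow (Ltot f) τ i j = true ↔ ∃ u : ℕ → Fin M, traj f u j τ = i) := by
  intro τ hτ
  induction τ, hτ using Nat.le_induction with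
  | base =>
    intro i j
    simp only [bPow, bMul, Ltot, decide_eq_true_eq]
    constructor
    · rintro ⟨l, hl, v, hv⟩
      exact ⟨fun _ => v, hv.trans hl.symm⟩
    · rintro ⟨u, hu⟩
      exact ⟨i, by simp, u 0, hu⟩
  | succ n hn ih =>
    intro i j
    simp only [bPow, bMul, decide_eq_true_eq]
    constructor
    · rintro ⟨l, hl, hA⟩
      simp only [Ltot, decide_eq_true_eq] at hA
      obtain ⟨v, hv⟩ := hA
      obtain ⟨u, hu⟩ := (ih i l).mp hl
      refine ⟨fun t => if t = 0 then v else u (t - 1), ?_⟩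
      rw [traj_shift]
      simpa [traj, hv] using hu
    · rintro ⟨u, hu⟩
      rw [traj_shift] at hu
      refine ⟨f (u 0) j, (ih i _).mpr ⟨_, hu⟩, ?_⟩
      simp only [Ltot, decide_eq_true_eq]
      exact ⟨u 0, rfl⟩

/-- `δ_N^i` is reachable from `δ_N^j` iff `∃ τ ≥ 1` with `[(L_tot)^τ]_{ij} = 1`. -/
theorem stmt4 {N M : ℕ} (f : Fin M → Fin N → Fin N) (i j : Fin N) :
    (∃ τ, 1 ≤ τ ∧ ∃ u : ℕ → Fin M, traj f u j τ = i) ↔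
      ∃ τ, 1 ≤ τ ∧ bPow (Ltot f) τ i j = true := by
  constructor
  · rintro ⟨τ, hτ, hu⟩
    exact ⟨τ, hτ, (key f τ hτ i j).mpr hu⟩
  · rintro ⟨τ, hτ, h⟩
    exact ⟨τ, hτ, (key f τ hτ i j).mp h⟩
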